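/- arXiv:2408.05509 — 3 statements merged into one kernel-verified Lean document; each statement's English description precedes it below -/
import Mathlib

section
/- Let F be a field and C a linear code of length n over F. If C is an LCED code, then the dual code C⊥ is also an LCED code. -/
open Matrix

/-! The dual code is the orthogonal complement for the dot product, which is nondegenerate, so
`C ↦ C⊥` is an inclusion-reversing involution of the lattice of codes and therefore sends a
complementary pair `C ⊕ D` to a complementary pair `C⊥ ⊕ D⊥`. Taking duals commutes with
permuting coordinates, so if `D` is `C⊥` with coordinates permuted by `σ`, then `D⊥` is
`C = (C⊥)⊥` permuted by `σ`, which is the complement required for `C⊥`. -/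

/-- The permutation matrix of `σ`: the `(i, j)` entry is `1` if `σ j = i` and `0` otherwise. -/
def permMat (F : Type*) [Zero F] [One F] {n : Type*} [DecidableEq n]
    (σ : Equiv.Perm n) : Matrix n n F :=
  Matrix.of fun i j => if σ j = i then 1 else 0

/-- A matrix `G` over a field is an LCED matrix if there is a permutation matrix `P`
such that `G * P * Gᵀ` is invertible. -/
def IsLCEDMatrix {F : Type*} [Field F] {k n : Type*} [Fintype k] [Fintype n]
    [DecidableEq k] [DecidableEq n] (G : Matrix k n F) : Prop :=
  ∃ σ : Equiv.Perm n, IsUnit (G * permMat F σ * Gᵀ)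

/-- The dual code of `C`: all vectors orthogonal (w.r.t. the standard bilinear form)
to every codeword of `C`. -/
def dualCode {F : Type*} [Field F] {n : ℕ} (C : Submodule F (Fin n → F)) :
    Submodule F (Fin n → F) where
  carrier := {x | ∀ c ∈ C, ∑ i, x i * c i = 0}
  add_mem' := by
    intro a b ha hb c hc
    simp only [Set.mem_setOf_eq] at *
    simp [add_mul, Finset.sum_add_distrib, ha c hc, hb c hc]
  zero_mem' := by
    intro c hc
    simp
  smul_mem' := by
    intro t a ha c hc
    simp only [Set.mem_setOf_eq] at *
    simp [smul_eq_mul, mul_assoc, ← Finset.mul_sum, ha c hc]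

/-- `C` is an LCED (linear complementary equi-dual) code if there is a linear code `D`
permutation equivalent to the dual code `C⊥` such that `Fⁿ = C ⊕ D`. -/
def IsLCEDCode {F : Type*} [Field F] {n : ℕ} (C : Submodule F (Fin n → F)) : Prop :=
  ∃ D : Submodule F (Fin n → F),
    (∃ σ : Equiv.Perm (Fin n), ∀ x : Fin n → F, x ∈ D ↔ (fun j => x (σ j)) ∈ dualCode C) ∧
    IsCompl C D

namespace LinearMap.BilinForm

variable {K V : Type*} [Field K] [AddCommGroup V] [Module K V] [FiniteDimensional K V]
  {B : LinearMap.BilinForm K V}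

def orthogonalOrderIso (hB : B.Nondegenerate) (hB₀ : B.IsRefl) :
    Submodule K V ≃o (Submodule K V)ᵒᵈ where
  toFun W := OrderDual.toDual (B.orthogonal W)
  invFun W := B.orthogonal (OrderDual.ofDual W)
  left_inv := B.orthogonal_orthogonal hB hB₀
  right_inv := B.orthogonal_orthogonal hB hB₀
  map_rel_iff' {W U} := by
    refine ⟨fun h => ?_, B.orthogonal_le⟩
    rw [← B.orthogonal_orthogonal hB hB₀ W, ← B.orthogonal_orthogonal hB hB₀ U]
    exact B.orthogonal_le h

theorem isCompl_orthogonal_of_isCompl (hB : B.Nondegenerate) (hB₀ : B.IsRefl)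
    {W U : Submodule K V} (h : IsCompl W U) : IsCompl (B.orthogonal W) (B.orthogonal U) :=
  isCompl_toDual_iff.mp ((orthogonalOrderIso hB hB₀).isCompl h)

end LinearMap.BilinForm

theorem Submodule.mem_comap_funLeft {R M ι κ : Type*} [Semiring R] [AddCommMonoid M] [Module R M]
    {f : ι → κ} {p : Submodule R (ι → M)} {x : κ → M} :
    x ∈ p.comap (LinearMap.funLeft R M f) ↔ x ∘ f ∈ p :=
  Iff.rfl

abbrev dotProductForm (F : Type*) [Field F] (n : ℕ) : LinearMap.BilinForm F (Fin n → F) :=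
  dotProductBilin F F

section DualCode

variable {F : Type*} [Field F] {n : ℕ}

theorem mem_dualCode {C : Submodule F (Fin n → F)} {x : Fin n → F} :
    x ∈ dualCode C ↔ ∀ c ∈ C, x ⬝ᵥ c = 0 :=
  Iff.rfl

theorem dotProductForm_nondegenerate : (dotProductForm F n).Nondegenerate :=
  ⟨fun x hx => dotProduct_eq_zero x hx,
    fun y hy => dotProduct_eq_zero y fun x => dotProduct_comm y x ▸ hy x⟩

theorem dotProductForm_isRefl : (dotProductForm F n).IsRefl :=
  fun x y h => (dotProduct_comm y x).trans h

theorem dualCode_eq_orthogonal (C : Submodule F (Fin n → F)) :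
    dualCode C = (dotProductForm F n).orthogonal C := by
  ext x
  exact forall₂_congr fun c _ => by
    rw [dotProductForm, dotProductBilin_apply_apply, dotProduct_comm c x, dotProduct]

@[simp]
theorem dualCode_dualCode (C : Submodule F (Fin n → F)) : dualCode (dualCode C) = C := by
  rw [dualCode_eq_orthogonal, dualCode_eq_orthogonal,
    (dotProductForm F n).orthogonal_orthogonal dotProductForm_nondegenerate dotProductForm_isRefl]

theorem IsCompl.dualCode {C D : Submodule F (Fin n → F)} (h : IsCompl C D) :
    IsCompl (dualCode C) (dualCode D) := by
  rw [dualCode_eq_orthogonal, dualCode_eq_orthogonal]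
  exact LinearMap.BilinForm.isCompl_orthogonal_of_isCompl dotProductForm_nondegenerate
    dotProductForm_isRefl h

@[simp]
theorem dualCode_comap_funLeft (σ : Equiv.Perm (Fin n)) (C : Submodule F (Fin n → F)) :
    dualCode (C.comap (LinearMap.funLeft F F σ)) = (dualCode C).comap (LinearMap.funLeft F F σ) := by
  ext x
  simp only [Submodule.mem_comap_funLeft, mem_dualCode]
  constructor
  · intro hx c hc
    rw [← dotProduct_comp_equiv_symm]
    exact hx _ (by simpa [Function.comp_assoc] using hc)
  · intro hx c hc
    rw [← comp_equiv_dotProduct_comp_equiv x c σ]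
    exact hx _ hc

end DualCode

theorem isLCEDCode_iff {F : Type*} [Field F] {n : ℕ} (C : Submodule F (Fin n → F)) :
    IsLCEDCode C ↔
      ∃ σ : Equiv.Perm (Fin n), IsCompl C ((dualCode C).comap (LinearMap.funLeft F F σ)) := by
  constructor
  · rintro ⟨D, ⟨σ, hD⟩, h⟩
    obtain rfl : D = (dualCode C).comap (LinearMap.funLeft F F σ) := SetLike.ext hD
    exact ⟨σ, h⟩
  · rintro ⟨σ, h⟩
    exact ⟨_, ⟨σ, fun _ => Iff.rfl⟩, h⟩

/-- if `C` is an LCED code then so is its dual `C⊥`. -/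
theorem stmt4 {F : Type*} [Field F] {n : ℕ} (C : Submodule F (Fin n → F))
    (h : IsLCEDCode C) : IsLCEDCode (dualCode C) := by
  obtain ⟨σ, hσ⟩ := (isLCEDCode_iff C).mp h
  refine (isLCEDCode_iff (dualCode C)).mpr ⟨σ, ?_⟩
  simpa only [dualCode_comap_funLeft, dualCode_dualCode] using hσ.dualCode
end

section
/- Let F be a field and A a k×(n−k) matrix over F. Then the k×n block matrix G₁ = (I_k | A) is an LCED matrix if and only if the (n−k)×n block matrix G₂ = (I_{n−k} | −Aᵀ) is an LCED matrix. -/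
open Matrix

/-!
With `U = (I A; 0 I)` and `W = (I 0; -Aᵀ I)` one has `U Wᵀ = I`, since `(I | A)(-Aᵀ | I)ᵀ = 0`.
Hence for a permutation matrix `P` the matrix `W P⁻¹ Wᵀ` is the inverse of `U P Uᵀ`. The top-left
block of `U P Uᵀ` is `G₁ P G₁ᵀ` and the bottom-right block of its inverse is `H P⁻¹ Hᵀ` with
`H = (-Aᵀ | I)`; by the Schur complement formula the second is invertible once the first is.
Finally `H` is `G₂` with its two column blocks swapped, which conjugates `P⁻¹` into another
permutation matrix. The converse is the same argument applied to `-Aᵀ`.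
-/

section PermMat

variable {n : Type*} [DecidableEq n]

lemma permMat_eq_permMatrix_inv (F : Type*) [Zero F] [One F] (σ : Equiv.Perm n) :
    permMat F σ = σ⁻¹.permMatrix F := by
  rw [← transpose_permMatrix]
  ext i j
  simp [permMat, PEquiv.toMatrix_apply]

variable [Fintype n] {R : Type*} [NonAssocSemiring R]

lemma mul_permMat {k : Type*} (G : Matrix k n R) (σ : Equiv.Perm n) :
    G * permMat R σ = G.submatrix id σ := by
  rw [permMat_eq_permMatrix_inv, Equiv.Perm.permMatrix, PEquiv.mul_toMatrix_toPEquiv,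
    ← Equiv.Perm.inv_def, inv_inv]

lemma permMat_inv_mul_permMat (σ : Equiv.Perm n) : permMat R σ⁻¹ * permMat R σ = 1 := by
  simp only [permMat_eq_permMatrix_inv, ← permMatrix_mul, mul_inv_cancel, permMatrix_one]

end PermMat

lemma IsLCEDMatrix.of_submatrix_id {F : Type*} [Field F] {k n n' : Type*} [Fintype k] [Fintype n]
    [Fintype n'] [DecidableEq k] [DecidableEq n] [DecidableEq n'] {G : Matrix k n F} (e : n' ≃ n)
    (h : IsLCEDMatrix (G.submatrix id e)) : IsLCEDMatrix G := by
  obtain ⟨σ, hσ⟩ := h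
  refine ⟨e.permCongr σ, ?_⟩
  have hcol : (G.submatrix id e).submatrix id σ =
      (G.submatrix id (e.permCongr σ)).submatrix id e := by
    ext; simp
  rwa [mul_permMat, hcol, transpose_submatrix, submatrix_mul_equiv, submatrix_id_id,
    ← mul_permMat] at hσ

lemma fromRows_mul_mul_transpose_fromRows {R : Type*} [Semiring R] {α β γ δ ε : Type*} [Fintype γ]
    (X₁ : Matrix α γ R) (X₂ : Matrix β γ R) (M : Matrix γ γ R) (Y₁ : Matrix δ γ R)
    (Y₂ : Matrix ε γ R) :
    fromRows X₁ X₂ * M * (fromRows Y₁ Y₂)ᵀ =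
      fromBlocks (X₁ * M * Y₁ᵀ) (X₁ * M * Y₂ᵀ) (X₂ * M * Y₁ᵀ) (X₂ * M * Y₂ᵀ) := by
  rw [fromRows_mul, transpose_fromRows, fromRows_mul_fromCols]

section Blocks

variable {α β : Type*} [Fintype α] [Fintype β] [DecidableEq α] [DecidableEq β]
  {R : Type*} [CommRing R]

lemma isUnit_toBlocks₂₂_of_mul_eq_one {X Y : Matrix (α ⊕ β) (α ⊕ β) R} (hYX : Y * X = 1)
    (h : IsUnit X.toBlocks₁₁) : IsUnit Y.toBlocks₂₂ := by
  obtain ⟨a, b, c, d, rfl⟩ : ∃ a b c d, X = fromBlocks a b c d :=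
    ⟨_, _, _, _, (fromBlocks_toBlocks X).symm⟩
  rw [toBlocks_fromBlocks₁₁] at h
  -- `Y` is the inverse of `X`, whose bottom-right block is the inverse of the Schur complement
  -- `d - c a⁻¹ b`.
  let := invertibleOfLeftInverse _ _ hYX
  let := h.invertible
  let := invertibleOfFromBlocks₁₁Invertible a b c d
  rw [← invOf_eq_left_inv hYX, invOf_fromBlocks₁₁_eq, toBlocks_fromBlocks₂₂]
  exact isUnit_of_invertible _

lemma isUnit_fromCols_neg_transpose_one_mul_mul_transpose (A : Matrix α β R)
    {M M' : Matrix (α ⊕ β) (α ⊕ β) R} (hM : M' * M = 1)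
    (h : IsUnit (fromCols (1 : Matrix α α R) A * M * (fromCols (1 : Matrix α α R) A)ᵀ)) :
    IsUnit (fromCols (-Aᵀ) (1 : Matrix β β R) * M' * (fromCols (-Aᵀ) (1 : Matrix β β R))ᵀ) := by
  set U := fromRows (fromCols (1 : Matrix α α R) A) (fromCols (0 : Matrix β α R) 1) with hU
  set W := fromRows (fromCols (1 : Matrix α α R) (0 : Matrix α β R)) (fromCols (-Aᵀ) 1) with hW
  have hUW : U * Wᵀ = 1 := by
    simp [U, W, fromRows_fromCols_eq_fromBlocks, fromBlocks_transpose, fromBlocks_multiply,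
      fromBlocks_one]
  have hWU : W * Uᵀ = 1 := by rw [← transpose_transpose W, ← transpose_mul, hUW, transpose_one]
  have hYX : W * M' * Wᵀ * (U * M * Uᵀ) = 1 := by
    calc W * M' * Wᵀ * (U * M * Uᵀ) = W * M' * (Wᵀ * U) * M * Uᵀ := by
          simp only [Matrix.mul_assoc]
      _ = 1 := by
        rw [mul_eq_one_comm.mp hUW, Matrix.mul_one, Matrix.mul_assoc W, hM, Matrix.mul_one, hWU]
  have hX₁₁ : IsUnit (U * M * Uᵀ).toBlocks₁₁ := by
    rwa [hU, fromRows_mul_mul_transpose_fromRows, toBlocks_fromBlocks₁₁]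
  have hY₂₂ := isUnit_toBlocks₂₂_of_mul_eq_one hYX hX₁₁
  rwa [hW, fromRows_mul_mul_transpose_fromRows, toBlocks_fromBlocks₂₂] at hY₂₂

end Blocks

lemma IsLCEDMatrix.fromCols_one_neg_transpose {F : Type*} [Field F] {α β : Type*} [Fintype α]
    [Fintype β] [DecidableEq α] [DecidableEq β] {A : Matrix α β F}
    (h : IsLCEDMatrix (fromCols (1 : Matrix α α F) A)) :
    IsLCEDMatrix (fromCols (1 : Matrix β β F) (-Aᵀ)) := by
  obtain ⟨σ, hσ⟩ := h
  have hswap : (fromCols (1 : Matrix β β F) (-Aᵀ)).submatrix id (Equiv.sumComm α β) =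
      fromCols (-Aᵀ) 1 := by
    ext i (j | j) <;> simp
  refine IsLCEDMatrix.of_submatrix_id (Equiv.sumComm α β) ⟨σ⁻¹, ?_⟩
  rw [hswap]
  exact isUnit_fromCols_neg_transpose_one_mul_mul_transpose A (permMat_inv_mul_permMat σ) hσ

/-- `(I_k | A)` is an LCED matrix iff `(I_{n-k} | -Aᵀ)` is an LCED matrix. -/
theorem stmt5 {F : Type*} [Field F] {k m : ℕ} (A : Matrix (Fin k) (Fin m) F) :
    IsLCEDMatrix (fromCols (1 : Matrix (Fin k) (Fin k) F) A) ↔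
    IsLCEDMatrix (fromCols (1 : Matrix (Fin m) (Fin m) F) (-Aᵀ)) :=
  ⟨IsLCEDMatrix.fromCols_one_neg_transpose, fun h => by
    simpa using h.fromCols_one_neg_transpose⟩
end

section
/- Let F be a field, n ≥ 4, and let G = (I_2 | A) be a 2×n matrix in standard form over F. If G is not an LCED matrix, then the sum of the entries on each of the two rows of G is 0 and the sum of the entries on each of the n columns of G is 1. -/
open Matrix

/-! Write `M_σ = G P_σ Gᵀ = ∑ c, g_(σ c) g_cᵀ` for the columns `g_c` of `G`. A transposition `(c d)`
gives `M_σ = G Gᵀ - w wᵀ` with `w = g_c - g_d`, and for `2 × 2` matrices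
`det (M - w wᵀ) = det M - wᵀ (adj M) w`. If every `M_σ` is singular, the identity and the swap of
the unit columns `e₀, e₁` force `G Gᵀ = a • !![1, -1; -1, 1]`. Swapping `e₀` with any other column
`u` then gives `a (u₀ + u₁ - 1)² = 0`, and when `a = 0` the 3-cycle `e₀ ↦ e₁ ↦ u ↦ e₀` has
determinant `(u₀ + u₁ - 1)²`. Once all columns sum to `1`, the row sums are `G 𝟙 = G Gᵀ 𝟙 = 0`. -/

theorem permMat_one (R : Type*) [Zero R] [One R] {n : Type*} [DecidableEq n] :
    permMat R (1 : Equiv.Perm n) = 1 := by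
  ext i j
  simp [permMat, one_apply, eq_comm]

theorem det_eq_zero_of_not_isLCEDMatrix {F : Type*} [Field F] {k n : Type*} [Fintype k]
    [Fintype n] [DecidableEq k] [DecidableEq n] {G : Matrix k n F} (h : ¬ IsLCEDMatrix G)
    (σ : Equiv.Perm n) : (G * permMat F σ * Gᵀ).det = 0 := by
  by_contra hσ
  exact h ⟨σ, (isUnit_iff_isUnit_det _).mpr (isUnit_iff_ne_zero.mpr hσ)⟩

section PermutedGram

variable {R : Type*} [CommRing R] {k n : Type*} [Fintype n] [DecidableEq n]

theorem mul_permMat_mul_transpose_apply (G : Matrix k n R) (σ : Equiv.Perm n) (a b : k) :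
    (G * permMat R σ * Gᵀ) a b = ∑ c, G a (σ c) * G b c := by
  simp [mul_apply, permMat, Finset.sum_ite_eq]

theorem mul_permMat_mul_transpose_eq_add_sum (G : Matrix k n R) {σ : Equiv.Perm n}
    {S : Finset n} (hS : ∀ c ∉ S, σ c = c) :
    G * permMat R σ * Gᵀ = G * Gᵀ + ∑ c ∈ S, vecMulVec (Gᵀ (σ c) - Gᵀ c) (Gᵀ c) := by
  ext a b
  have hsub : ∑ c ∈ S, (G a (σ c) - G a c) * G b c = ∑ c, (G a (σ c) - G a c) * G b c :=
    Finset.sum_subset (Finset.subset_univ S) fun c _ hc => by simp [hS c hc]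
  rw [Matrix.add_apply, mul_permMat_mul_transpose_apply, Matrix.sum_apply]
  simp only [vecMulVec_apply, Pi.sub_apply, transpose_apply, hsub, mul_apply,
    ← Finset.sum_add_distrib]
  exact Finset.sum_congr rfl fun c _ => by ring

theorem mul_permMat_swap_mul_transpose (G : Matrix k n R) {c d : n} (hcd : c ≠ d) :
    G * permMat R (Equiv.swap c d) * Gᵀ = G * Gᵀ - vecMulVec (Gᵀ c - Gᵀ d) (Gᵀ c - Gᵀ d) := by
  rw [mul_permMat_mul_transpose_eq_add_sum G (S := {c, d})
    fun e he => Equiv.swap_apply_of_ne_of_ne (by simp_all) (by simp_all),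
    Finset.sum_pair hcd, Equiv.swap_apply_left, Equiv.swap_apply_right, sub_eq_add_neg]
  ext a b
  simp only [Matrix.add_apply, Matrix.sub_apply, vecMulVec_apply, Pi.sub_apply, Pi.add_apply,
    Pi.neg_apply]
  ring

end PermutedGram

theorem det_sub_vecMulVec_self_fin_two {R : Type*} [CommRing R] (M : Matrix (Fin 2) (Fin 2) R)
    (w : Fin 2 → R) : (M - vecMulVec w w).det =
      M.det - (M 1 1 * w 0 ^ 2 - (M 0 1 + M 1 0) * w 0 * w 1 + M 0 0 * w 1 ^ 2) := by
  simp only [det_fin_two, Matrix.sub_apply, vecMulVec_apply]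
  ring

theorem sum_row_eq_sum_mul_transpose_of_sum_col_eq_one {R : Type*} [CommRing R] {k n : Type*}
    [Fintype k] [Fintype n] {G : Matrix k n R} (hG : ∀ j, ∑ a, G a j = 1) (i : k) :
    ∑ j, G i j = ∑ a, (G * Gᵀ) i a := by
  simp only [mul_apply, transpose_apply]
  rw [Finset.sum_comm]
  exact Finset.sum_congr rfl fun j _ => by rw [← Finset.mul_sum, hG, mul_one]

theorem eq_neg_and_eq_of_mul_eq_of_add_eq_zero {R : Type*} [CommRing R] [NoZeroDivisors R]
    {a b d : R} (hdet : a * d = b * b) (htr : a + 2 * b + d = 0) : b = -a ∧ d = a := by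
  have h : (a + b) * (d + b) = 0 := by linear_combination hdet + b * htr
  rcases mul_eq_zero.mp h with h | h
  · exact ⟨by linear_combination h, by linear_combination htr - 2 * h⟩
  · exact ⟨by linear_combination htr - h, by linear_combination 2 * h - htr⟩

section TwoRows

variable {F : Type*} [Field F] {n : Type*} {G : Matrix (Fin 2) n F}
  {c₀ c₁ : n} (h₀ : Gᵀ c₀ = ![1, 0]) (h₁ : Gᵀ c₁ = ![0, 1])
include h₀ h₁

theorem ne_of_transpose_eq_basis : c₀ ≠ c₁ := by
  rintro rfl
  simpa using congrFun (h₀.symm.trans h₁) 0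

variable [Fintype n] [DecidableEq n]

theorem mul_transpose_eq_smul_of_not_isLCEDMatrix (hG : ¬ IsLCEDMatrix G) :
    G * Gᵀ = (G * Gᵀ) 0 0 • !![1, -1; -1, 1] := by
  have hid := det_eq_zero_of_not_isLCEDMatrix hG 1
  have hswap := det_eq_zero_of_not_isLCEDMatrix hG (Equiv.swap c₀ c₁)
  rw [permMat_one, Matrix.mul_one] at hid
  rw [mul_permMat_swap_mul_transpose G (ne_of_transpose_eq_basis h₀ h₁),
    det_sub_vecMulVec_self_fin_two, hid, h₀, h₁] at hswap
  have hsymm : (G * Gᵀ) 1 0 = (G * Gᵀ) 0 1 := by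
    rw [← transpose_apply (G * Gᵀ), transpose_mul, transpose_transpose]
  set M := G * Gᵀ
  clear_value M
  rw [det_fin_two] at hid
  simp only [Pi.sub_apply, cons_val_zero, cons_val_one, cons_val_fin_one] at hswap
  obtain ⟨h01, h11⟩ :=
    eq_neg_and_eq_of_mul_eq_of_add_eq_zero (a := M 0 0) (b := M 0 1) (d := M 1 1)
      (by linear_combination hid + M 0 1 * hsymm) (by linear_combination -hswap - hsymm)
  ext i j
  fin_cases i <;> fin_cases j <;> simp [h01, h11, hsymm]

theorem mul_sq_eq_zero_of_not_isLCEDMatrix (hG : ¬ IsLCEDMatrix G) {c : n} (hc : c ≠ c₀) :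
    (G * Gᵀ) 0 0 * (G 0 c + G 1 c - 1) ^ 2 = 0 := by
  have hswap := det_eq_zero_of_not_isLCEDMatrix hG (Equiv.swap c₀ c)
  rw [mul_permMat_swap_mul_transpose G hc.symm, det_sub_vecMulVec_self_fin_two,
    mul_transpose_eq_smul_of_not_isLCEDMatrix h₀ h₁ hG, h₀] at hswap
  simp only [det_fin_two, Matrix.smul_apply, of_apply, cons_val', cons_val_zero, cons_val_one,
    cons_val_fin_one, Pi.sub_apply, transpose_apply, smul_eq_mul] at hswap
  linear_combination -hswap

theorem sq_eq_zero_of_mul_transpose_eq_zero (hG : ¬ IsLCEDMatrix G) (hM : G * Gᵀ = 0) {c : n}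
    (hc₀ : c ≠ c₀) (hc₁ : c ≠ c₁) : (G 0 c + G 1 c - 1) ^ 2 = 0 := by
  have h01 := ne_of_transpose_eq_basis h₀ h₁
  set σ := Equiv.swap c₀ c * Equiv.swap c₀ c₁
  have hσ₀ : σ c₀ = c₁ := by simp [σ, Equiv.swap_apply_of_ne_of_ne h01.symm hc₁.symm]
  have hσ₁ : σ c₁ = c := by simp [σ]
  have hσ : σ c = c₀ := by simp [σ, Equiv.swap_apply_of_ne_of_ne hc₀ hc₁]
  have hcycle := det_eq_zero_of_not_isLCEDMatrix hG σ
  rw [mul_permMat_mul_transpose_eq_add_sum G (S := {c₀, c₁, c}) fun d hd => by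
      simp only [Finset.mem_insert, Finset.mem_singleton, not_or] at hd
      simp [σ, Equiv.swap_apply_of_ne_of_ne hd.1 hd.2.2, Equiv.swap_apply_of_ne_of_ne hd.1 hd.2.1],
    Finset.sum_insert (by simp [h01, hc₀.symm]), Finset.sum_pair hc₁.symm, hσ₀, hσ₁, hσ, hM,
    h₀, h₁, det_fin_two] at hcycle
  simp only [Matrix.add_apply, vecMulVec_apply, Pi.sub_apply, Matrix.zero_apply,
    transpose_apply, cons_val_zero, cons_val_one, cons_val_fin_one] at hcycle
  linear_combination hcycle

theorem sum_col_eq_one_of_not_isLCEDMatrix (hG : ¬ IsLCEDMatrix G) (c : n) :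
    ∑ i, G i c = 1 := by
  rw [Fin.sum_univ_two]
  by_cases hc₀ : c = c₀
  · rw [hc₀, ← transpose_apply G c₀ 0, ← transpose_apply G c₀ 1, h₀]
    simp
  by_cases hc₁ : c = c₁
  · rw [hc₁, ← transpose_apply G c₁ 0, ← transpose_apply G c₁ 1, h₁]
    simp
  have hsq : (G 0 c + G 1 c - 1) ^ 2 = 0 := by
    rcases mul_eq_zero.mp (mul_sq_eq_zero_of_not_isLCEDMatrix h₀ h₁ hG hc₀) with ha | hsq
    · refine sq_eq_zero_of_mul_transpose_eq_zero h₀ h₁ hG ?_ hc₀ hc₁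
      rw [mul_transpose_eq_smul_of_not_isLCEDMatrix h₀ h₁ hG, ha, zero_smul]
    · exact hsq
  linear_combination eq_zero_of_pow_eq_zero hsq

theorem sum_row_eq_zero_of_not_isLCEDMatrix (hG : ¬ IsLCEDMatrix G) (i : Fin 2) :
    ∑ c, G i c = 0 := by
  rw [sum_row_eq_sum_mul_transpose_of_sum_col_eq_one
      (sum_col_eq_one_of_not_isLCEDMatrix h₀ h₁ hG),
    mul_transpose_eq_smul_of_not_isLCEDMatrix h₀ h₁ hG]
  fin_cases i <;> simp

end TwoRows

theorem stmt19_general {F : Type*} [Field F] {m : ℕ}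
    (A : Matrix (Fin 2) (Fin m) F)
    (h : ¬ IsLCEDMatrix (fromCols (1 : Matrix (Fin 2) (Fin 2) F) A)) :
    (∀ i, ∑ j, fromCols (1 : Matrix (Fin 2) (Fin 2) F) A i j = 0) ∧
    (∀ j, ∑ i, fromCols (1 : Matrix (Fin 2) (Fin 2) F) A i j = 1) := by
  have h₀ : (fromCols (1 : Matrix (Fin 2) (Fin 2) F) A)ᵀ (Sum.inl 0) = ![1, 0] := by
    ext i; fin_cases i <;> simp
  have h₁ : (fromCols (1 : Matrix (Fin 2) (Fin 2) F) A)ᵀ (Sum.inl 1) = ![0, 1] := by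
    ext i; fin_cases i <;> simp
  exact ⟨sum_row_eq_zero_of_not_isLCEDMatrix h₀ h₁ h, sum_col_eq_one_of_not_isLCEDMatrix h₀ h₁ h⟩

/-- for `n ≥ 4`, if the `2 × n` standard-form matrix `G = (I_2 | A)` is not
an LCED matrix, then every row of `G` sums to `0` and every column of `G` sums to `1`. -/
theorem stmt19 {F : Type*} [Field F] {m : ℕ} (hm : 2 ≤ m)
    (A : Matrix (Fin 2) (Fin m) F)
    (h : ¬ IsLCEDMatrix (fromCols (1 : Matrix (Fin 2) (Fin 2) F) A)) :
    (∀ i, ∑ j, fromCols (1 : Matrix (Fin 2) (Fin 2) F) A i j = 0) ∧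
    (∀ j, ∑ i, fromCols (1 : Matrix (Fin 2) (Fin 2) F) A i j = 1) :=
  stmt19_general A h
end
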